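/- Let (G; (ρ_0, …, ρ_{n−1})) be an irreducible string C-group representation of rank n ≥ 4 of a group G. If ρ_0 belongs to the subgroup generated by ρ_0ρ_2 and ρ_3, then (G; (ρ_1, ρ_0ρ_2, ρ_3, ρ_4, …, ρ_{n−1})) is a string C-group representation of G of rank n−1. -/

import Mathlib

/-- A string C-group representation of rank `n` of a group `G`: a family of `n`
involutions generating `G`, satisfying the commuting (string) property and the
intersection property. -/
def IsStringCGroupRep {G : Type*} [Group G] {n : ℕ} (ρ : Fin n → G) : Prop :=
  (∀ i, orderOf (ρ i) = 2) ∧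
  Subgroup.closure (Set.range ρ) = ⊤ ∧
  (∀ i j : Fin n, i.val + 1 < j.val → Commute (ρ i) (ρ j)) ∧
  (∀ I J : Set (Fin n),
    Subgroup.closure (ρ '' I) ⊓ Subgroup.closure (ρ '' J) = Subgroup.closure (ρ '' (I ∩ J)))

/-!
Extend `ρ` by `1` to a family `r` indexed by `ℕ`, so that the new generators are `σ₀ = r₁`,
`σ₁ = r₀ r₂` and `σₖ = r_{k+1}` for `k ≥ 2`. For a set `S` of new indices, `⟨σ_S⟩` lies in the
subgroup generated by the `r m` occurring in the `σ_j`, `j ∈ S`, with equality unless `1 ∈ S` and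
`2 ∉ S`, because `r₀ ∈ ⟨r₀ r₂, r₃⟩`. Taking the `r m` that occur commutes with intersections, so the
intersection property of `r` gives `⟨σ_I⟩ ∩ ⟨σ_J⟩ = ⟨σ_{I ∩ J}⟩` whenever equality holds for
`I ∩ J`. Otherwise, say `1 ∈ I ∩ J` and `2 ∉ I`; then `⟨σ_I⟩` splits into a part in `⟨r₀, r₁, r₂⟩`
and a part in `⟨r_m : m ≥ 4⟩`, two subgroups that commute and meet trivially, and everything
reduces to `⟨r₁, r₀ r₂⟩ ∩ ⟨r₀, r₂⟩ = ⟨r₀ r₂⟩`. This is where irreducibility enters: if `r₀` lay in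
the dihedral group `⟨r₁, r₀ r₂⟩`, then `r₀` or `r₂` would be a power of its rotation `r₁ r₀ r₂`
and hence commute with `r₁`.
-/

open Subgroup

section Involutions

variable {G : Type*} [Group G] {x y z : G}

theorem mul_zpow_mul_eq_zpow_neg_mul (hx : x * x = 1) (hy : y * y = 1) (k : ℤ) :
    x * (x * y) ^ k = (x * y) ^ (-k) * x := by
  have hconj : x * (x * y) * x⁻¹ = (x * y)⁻¹ := by
    rw [inv_eq_of_mul_eq_one_right hx, mul_inv_rev, inv_eq_of_mul_eq_one_right hx,
      inv_eq_of_mul_eq_one_right hy, ← mul_assoc, hx, one_mul]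
  calc x * (x * y) ^ k = (x * (x * y) * x⁻¹) ^ k * x := by rw [conj_zpow]; group
    _ = (x * y) ^ (-k) * x := by rw [hconj, inv_zpow, zpow_neg]

theorem commute_of_eq_zpow (hx : x * x = 1) (hy : y * y = 1) (hz : z * z = 1) {k : ℤ}
    (h : z = (x * y) ^ k) : Commute x z := by
  have hzinv : (x * y) ^ (-k) = z := by rw [zpow_neg, ← h, inv_eq_of_mul_eq_one_right hz]
  show x * z = z * x
  rw [h, mul_zpow_mul_eq_zpow_neg_mul hx hy, hzinv, ← h]

theorem exists_zpow_of_mem_closure_pair (hx : x * x = 1) (hy : y * y = 1) {g : G}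
    (hg : g ∈ closure {x, y}) : ∃ k : ℤ, g = (x * y) ^ k ∨ g = (x * y) ^ k * x := by
  set P : G → Prop := fun g => ∃ k : ℤ, g = (x * y) ^ k ∨ g = (x * y) ^ k * x
  have hxP : ∀ g, P g → P (x * g) := by
    rintro g ⟨k, rfl | rfl⟩
    · exact ⟨-k, Or.inr (mul_zpow_mul_eq_zpow_neg_mul hx hy k)⟩
    · refine ⟨-k, Or.inl ?_⟩
      rw [← mul_assoc, mul_zpow_mul_eq_zpow_neg_mul hx hy, mul_assoc, hx, mul_one]
  have hrP : ∀ g, P g → P (x * y * g) := by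
    rintro g ⟨k, rfl | rfl⟩
    · exact ⟨1 + k, Or.inl (by rw [zpow_one_add])⟩
    · exact ⟨1 + k, Or.inr (by simp only [zpow_one_add, mul_assoc])⟩
  have hyP : ∀ g, P g → P (y * g) := fun g hg => by
    simpa only [← mul_assoc, hx, one_mul] using hxP _ (hrP g hg)
  have hP : ∀ z ∈ ({x, y} : Set G), ∀ g, P g → P (z * g) := by
    rintro z (rfl | rfl)
    · exact hxP
    · exact hyP
  induction hg using closure_induction_left with
  | one => exact ⟨0, Or.inl (zpow_zero _).symm⟩
  | mul_left z hz g _ ih => exact hP z hz g ih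
  | inv_mul_cancel z hz g _ ih =>
    rcases hz with rfl | rfl
    · rw [inv_eq_of_mul_eq_one_right hx]; exact hxP g ih
    · rw [inv_eq_of_mul_eq_one_right hy]; exact hyP g ih

theorem closure_pair_inf_closure_pair_le_zpowers {a b c : G} (ha : a * a = 1) (hb : b * b = 1)
    (hc : c * c = 1) (hac : Commute a c) (hab : ¬Commute a b) (hbc : ¬Commute b c) :
    closure {b, a * c} ⊓ closure {a, c} ≤ zpowers (a * c) := by
  have hac2 : a * c * (a * c) = 1 := by rw [hac.symm.mul_mul_mul_comm, ha, hc, one_mul]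
  have ha_not_mem : a ∉ closure {b, a * c} := by
    intro ha_mem
    obtain ⟨k, hk | hk⟩ := exists_zpow_of_mem_closure_pair hb hac2 ha_mem
    · exact hab (commute_of_eq_zpow hb hac2 ha hk).symm
    · have hck : c = (b * (a * c)) ^ (k + 1) := by
        rw [zpow_add_one, ← mul_assoc, ← hk, ← mul_assoc, ha, one_mul]
      exact hbc (commute_of_eq_zpow hb hac2 hc hck)
  rintro g ⟨hgD, hgV⟩
  obtain ⟨k, rfl | rfl⟩ := exists_zpow_of_mem_closure_pair ha hc hgV
  · exact zpow_mem_zpowers _ _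
  · have hk : (a * c) ^ k ∈ closure {b, a * c} := zpow_mem (subset_closure (by simp)) k
    exact absurd (by simpa using mul_mem (inv_mem hk) hgD) ha_not_mem

theorem orderOf_mul_eq_two_of_commute {a b : G} (ha : a * a = 1) (hb : b * b = 1)
    (hab : Commute a b) (hne : a ≠ b) : orderOf (a * b) = 2 :=
  orderOf_eq_prime (by rw [sq, hab.symm.mul_mul_mul_comm, ha, hb, one_mul])
    (fun h => hne (by rw [mul_eq_one_iff_eq_inv.mp h, inv_eq_of_mul_eq_one_right hb]))

end Involutions

theorem Subgroup.sup_inf_sup_le_of_disjoint {G : Type*} [Group G]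
    {A B U₁ U₂ V₁ V₂ : Subgroup G} (hAB : Disjoint A B) (hBA : B ≤ centralizer A)
    (hU₁ : U₁ ≤ A) (hU₂ : U₂ ≤ A) (hV₁ : V₁ ≤ B) (hV₂ : V₂ ≤ B) :
    (U₁ ⊔ V₁) ⊓ (U₂ ⊔ V₂) ≤ (U₁ ⊓ U₂) ⊔ (V₁ ⊓ V₂) := by
  have hmul : ∀ {U V : Subgroup G}, U ≤ A → V ≤ B → ∀ g ∈ U ⊔ V, ∃ u ∈ U, ∃ v ∈ V, u * v = g := by
    intro U V hU hV g hg
    have hnorm : V ≤ normalizer U :=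
      (hV.trans hBA).trans ((centralizer_le hU).trans (centralizer_le_normalizer _))
    rwa [← SetLike.mem_coe, coe_mul_of_right_le_normalizer_left U V hnorm] at hg
  rintro g ⟨h₁, h₂⟩
  obtain ⟨u₁, hu₁, v₁, hv₁, rfl⟩ := hmul hU₁ hV₁ g h₁
  obtain ⟨u₂, hu₂, v₂, hv₂, huv⟩ := hmul hU₂ hV₂ _ h₂
  obtain ⟨rfl, rfl⟩ : u₂ = u₁ ∧ v₂ = v₁ := by
    simpa [Prod.ext_iff] using mul_injective_of_disjoint hAB
      (a₁ := (⟨u₂, hU₂ hu₂⟩, ⟨v₂, hV₂ hv₂⟩)) (a₂ := (⟨u₁, hU₁ hu₁⟩, ⟨v₁, hV₁ hv₁⟩)) huv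
  exact mul_mem_sup ⟨hu₁, hu₂⟩ ⟨hv₁, hv₂⟩

section IntersectionProperty

variable {G ι κ : Type*} [Group G] {ρ : ι → G}

def HasIntersectionProperty (ρ : ι → G) : Prop :=
  ∀ I J : Set ι, closure (ρ '' I) ⊓ closure (ρ '' J) = closure (ρ '' (I ∩ J))

theorem HasIntersectionProperty.comp (h : HasIntersectionProperty ρ) {f : κ → ι}
    (hf : Function.Injective f) : HasIntersectionProperty (ρ ∘ f) := by
  intro I J
  simp only [Set.image_comp, Set.image_inter hf]
  exact h _ _

theorem HasIntersectionProperty.disjoint (h : HasIntersectionProperty ρ) {I J : Set ι}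
    (hIJ : Disjoint I J) : Disjoint (closure (ρ '' I)) (closure (ρ '' J)) := by
  rw [disjoint_iff, h, hIJ.inter_eq, Set.image_empty, Subgroup.closure_empty]

theorem HasIntersectionProperty.apply_ne_apply (h : HasIntersectionProperty ρ) {i j : ι}
    (hi : ρ i ≠ 1) (hij : i ≠ j) : ρ i ≠ ρ j := fun heq =>
  hi <| disjoint_def.mp (h.disjoint (Set.disjoint_singleton.mpr hij))
    (subset_closure (Set.mem_image_of_mem ρ rfl)) (heq ▸ subset_closure (Set.mem_image_of_mem ρ rfl))

def extendByOne {n : ℕ} (ρ : Fin n → G) (k : ℕ) : G :=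
  if h : k < n then ρ ⟨k, h⟩ else 1

theorem extendByOne_of_lt {n : ℕ} (ρ : Fin n → G) {k : ℕ} (hk : k < n) :
    extendByOne ρ k = ρ ⟨k, hk⟩ :=
  dif_pos hk

theorem extendByOne_mul_self {n : ℕ} {ρ : Fin n → G} (h : ∀ i, ρ i * ρ i = 1) (k : ℕ) :
    extendByOne ρ k * extendByOne ρ k = 1 := by
  unfold extendByOne
  split_ifs
  exacts [h _, one_mul 1]

theorem extendByOne_commute {n : ℕ} {ρ : Fin n → G}
    (h : ∀ i j : Fin n, i.val + 1 < j.val → Commute (ρ i) (ρ j)) {i j : ℕ} (hij : i + 1 < j) :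
    Commute (extendByOne ρ i) (extendByOne ρ j) := by
  unfold extendByOne
  split_ifs
  exacts [h _ _ hij, Commute.one_right _, Commute.one_left _, Commute.one_left _]

theorem closure_image_extendByOne {n : ℕ} (ρ : Fin n → G) (S : Set ℕ) :
    closure (extendByOne ρ '' S) = closure (ρ '' (Fin.val ⁻¹' S)) := by
  refine le_antisymm (closure_le _ |>.mpr ?_) (closure_mono ?_)
  · rintro _ ⟨k, hk, rfl⟩
    unfold extendByOne
    split_ifs with h
    · exact subset_closure ⟨⟨k, h⟩, hk, rfl⟩
    · exact one_mem _
  · rintro _ ⟨i, hi, rfl⟩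
    exact ⟨i.val, hi, extendByOne_of_lt ρ i.isLt⟩

theorem HasIntersectionProperty.extendByOne {n : ℕ} {ρ : Fin n → G}
    (h : HasIntersectionProperty ρ) : HasIntersectionProperty (extendByOne ρ) := by
  intro I J
  simp only [closure_image_extendByOne, Set.preimage_inter]
  exact h _ _

end IntersectionProperty

def reducedFamily {G : Type*} [Group G] (r : ℕ → G) : ℕ → G
  | 0 => r 1
  | 1 => r 0 * r 2
  | k + 2 => r (k + 3)

/-- `reducedIndex m` is the index of the member of `reducedFamily r` in which `r m` occurs. -/
def reducedIndex : ℕ → ℕ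
  | 0 => 1
  | 1 => 0
  | 2 => 1
  | k + 3 => k + 2

section ReducedFamily

variable {G : Type*} [Group G] {r : ℕ → G} {S K : Set ℕ} {m : ℕ}

@[simp] theorem reducedFamily_zero : reducedFamily r 0 = r 1 := rfl

@[simp] theorem reducedFamily_one : reducedFamily r 1 = r 0 * r 2 := rfl

@[simp] theorem reducedFamily_add_two (k : ℕ) : reducedFamily r (k + 2) = r (k + 3) := rfl

theorem closure_reducedFamily_le (r : ℕ → G) (S : Set ℕ) :
    closure (reducedFamily r '' S) ≤ closure (r '' (reducedIndex ⁻¹' S)) := by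
  rw [closure_le]
  rintro _ ⟨j, hj, rfl⟩
  have hr : ∀ m, reducedIndex m = j → r m ∈ closure (r '' (reducedIndex ⁻¹' S)) :=
    fun m hm => subset_closure ⟨m, by rwa [Set.mem_preimage, hm], rfl⟩
  match j with
  | 0 => exact hr 1 rfl
  | 1 => exact mul_mem (hr 0 rfl) (hr 2 rfl)
  | k + 2 => exact hr (k + 3) rfl

theorem apply_mem_closure_reducedFamily (hm : reducedIndex m ∈ S) (hm0 : m ≠ 0) (hm2 : m ≠ 2) :
    r m ∈ closure (reducedFamily r '' S) := by
  obtain _ | _ | _ | k := m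
  · exact absurd rfl hm0
  · exact subset_closure ⟨0, hm, rfl⟩
  · exact absurd rfl hm2
  · exact subset_closure ⟨k + 2, hm, rfl⟩

theorem apply_mem_closure_reducedFamily_of_two_mem (h0 : r 0 * r 0 = 1)
    (hmem : r 0 ∈ closure {r 0 * r 2, r 3}) (hm : reducedIndex m ∈ S) (h2 : 2 ∈ S) :
    r m ∈ closure (reducedFamily r '' S) := by
  by_cases h02 : m = 0 ∨ m = 2
  · have h1 : 1 ∈ S := by rcases h02 with rfl | rfl <;> exact hm
    have hs1 : r 0 * r 2 ∈ closure (reducedFamily r '' S) := subset_closure ⟨1, h1, rfl⟩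
    have hr0 : r 0 ∈ closure (reducedFamily r '' S) := by
      refine (closure_le _).mpr ?_ hmem
      rintro _ (rfl | rfl)
      exacts [hs1, subset_closure ⟨2, h2, rfl⟩]
    rcases h02 with rfl | rfl
    · exact hr0
    · simpa [← mul_assoc, h0] using mul_mem hr0 hs1
  · exact apply_mem_closure_reducedFamily hm (not_or.mp h02).1 (not_or.mp h02).2

theorem closure_reducedFamily_eq (h0 : r 0 * r 0 = 1) (hmem : r 0 ∈ closure {r 0 * r 2, r 3})
    (hS : 1 ∈ S → 2 ∈ S) :
    closure (reducedFamily r '' S) = closure (r '' (reducedIndex ⁻¹' S)) := by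
  refine le_antisymm (closure_reducedFamily_le r S) ((closure_le _).mpr ?_)
  rintro _ ⟨m, hm, rfl⟩
  by_cases h2 : 2 ∈ S
  · exact apply_mem_closure_reducedFamily_of_two_mem h0 hmem hm h2
  · refine apply_mem_closure_reducedFamily hm ?_ ?_ <;> rintro rfl <;> exact h2 (hS hm)

theorem reducedFamily_commute (hcomm : ∀ i j, i + 1 < j → Commute (r i) (r j)) {i j : ℕ}
    (hij : i + 1 < j) : Commute (reducedFamily r i) (reducedFamily r j) := by
  obtain ⟨j, rfl⟩ : ∃ k, j = k + 2 := ⟨j - 2, by omega⟩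
  obtain _ | _ | i := i
  · exact hcomm 1 (j + 3) (by omega)
  · exact (hcomm 0 (j + 3) (by omega)).mul_left (hcomm 2 (j + 3) (by omega))
  · exact hcomm (i + 3) (j + 3) (by omega)

theorem orderOf_reducedFamily {n : ℕ} (hr : ∀ i, r i * r i = 1)
    (hord : ∀ i < n, orderOf (r i) = 2) (hcomm : Commute (r 0) (r 2)) (hne : r 0 ≠ r 2) {i : ℕ}
    (hi : i + 1 < n) : orderOf (reducedFamily r i) = 2 := by
  obtain _ | _ | i := i
  · exact hord 1 hi
  · exact orderOf_mul_eq_two_of_commute (hr 0) (hr 2) hcomm hne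
  · exact hord (i + 3) hi

theorem closure_image_le_centralizer (hcomm : ∀ i j, i + 1 < j → Commute (r i) (r j))
    {I J : Set ℕ} (hIJ : ∀ i ∈ I, ∀ j ∈ J, i + 1 < j) :
    closure (r '' J) ≤ centralizer (closure (r '' I)) := by
  rw [centralizer_closure, closure_le]
  rintro _ ⟨j, hj, rfl⟩ _ ⟨i, hi, rfl⟩
  exact (hcomm i j (hIJ i hi j hj)).eq

theorem closure_reducedFamily_pair_inf_le (hr : ∀ i, r i * r i = 1)
    (hcomm : Commute (r 0) (r 2)) (h01 : ¬Commute (r 0) (r 1)) (h12 : ¬Commute (r 1) (r 2))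
    (h1K : 1 ∈ K) :
    closure (reducedFamily r '' {0, 1}) ⊓ closure (r '' (reducedIndex ⁻¹' K ∩ Set.Iic 2)) ≤
      closure (reducedFamily r '' K) := by
  by_cases h0K : 0 ∈ K
  · refine inf_le_left.trans (closure_mono (Set.image_mono ?_))
    rintro _ (rfl | rfl)
    exacts [h0K, h1K]
  have hlow : closure (r '' (reducedIndex ⁻¹' K ∩ Set.Iic 2)) ≤ closure {r 0, r 2} := by
    rw [← Set.image_pair]
    refine closure_mono (Set.image_mono fun m hm => ?_)
    rcases m with _ | _ | _ | k <;> simp_all [reducedIndex]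
  calc _ ≤ Subgroup.closure {r 1, r 0 * r 2} ⊓ Subgroup.closure {r 0, r 2} :=
        inf_le_inf (by rw [Set.image_pair, reducedFamily_zero, reducedFamily_one]) hlow
    _ ≤ zpowers (r 0 * r 2) :=
        closure_pair_inf_closure_pair_le_zpowers (hr 0) (hr 1) (hr 2) hcomm h01 h12
    _ ≤ _ := zpowers_le.mpr (subset_closure (Set.mem_image_of_mem (reducedFamily r) h1K))

theorem closure_reducedFamily_inf_le (hr : ∀ i, r i * r i = 1)
    (hcomm : ∀ i j, i + 1 < j → Commute (r i) (r j)) (hIP : HasIntersectionProperty r)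
    (h01 : ¬Commute (r 0) (r 1)) (h12 : ¬Commute (r 1) (r 2))
    (hKS : K ⊆ S) (h1K : 1 ∈ K) (h2S : 2 ∉ S) :
    closure (reducedFamily r '' S) ⊓ closure (r '' (reducedIndex ⁻¹' K)) ≤
      closure (reducedFamily r '' K) := by
  have hS : closure (reducedFamily r '' S) ≤
      closure (reducedFamily r '' {0, 1}) ⊔ closure (reducedFamily r '' (S ∩ Set.Ici 2)) := by
    rw [← Subgroup.closure_union, ← Set.image_union]
    refine closure_mono (Set.image_mono fun j hj => ?_)
    rcases Nat.lt_or_ge j 2 with h | h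
    · exact Or.inl (by interval_cases j <;> simp)
    · exact Or.inr ⟨hj, h⟩
  have hK : closure (r '' (reducedIndex ⁻¹' K)) ≤
      closure (r '' (reducedIndex ⁻¹' K ∩ Set.Iic 2)) ⊔
        closure (r '' (reducedIndex ⁻¹' K ∩ Set.Ici 4)) := by
    rw [← Subgroup.closure_union, ← Set.image_union]
    refine closure_mono (Set.image_mono fun m hm => ?_)
    have hm3 : m ≠ 3 := by rintro rfl; exact h2S (hKS hm)
    rcases Nat.lt_or_ge m 3 with h | h
    · exact Or.inl ⟨hm, Set.mem_Iic.mpr (by omega)⟩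
    · exact Or.inr ⟨hm, Set.mem_Ici.mpr (by omega)⟩
  have hdisj : Disjoint (closure (r '' Set.Iic 2)) (closure (r '' Set.Ici 4)) :=
    hIP.disjoint (Set.disjoint_left.mpr fun m h2 h4 => by simp_all; omega)
  have hcent := closure_image_le_centralizer hcomm (I := Set.Iic 2) (J := Set.Ici 4)
    fun i hi j hj => by simp_all; omega
  refine (inf_le_inf hS hK).trans <| (sup_inf_sup_le_of_disjoint hdisj hcent ?_
    (closure_mono (Set.image_mono Set.inter_subset_right)) ?_
    (closure_mono (Set.image_mono Set.inter_subset_right))).trans (sup_le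
      (closure_reducedFamily_pair_inf_le hr (hcomm 0 2 (by norm_num)) h01 h12 h1K) ?_)
  · refine (closure_reducedFamily_le r _).trans (closure_mono (Set.image_mono fun m hm => ?_))
    rcases m with _ | _ | _ | k <;> simp_all [reducedIndex]
  · refine (closure_reducedFamily_le r _).trans (closure_mono (Set.image_mono fun m hm => ?_))
    rcases m with _ | _ | _ | _ | k <;> simp_all [reducedIndex]
  · refine inf_le_right.trans ((closure_le _).mpr ?_)
    rintro _ ⟨m, ⟨hm, hm4⟩, rfl⟩
    exact apply_mem_closure_reducedFamily hm (by rintro rfl; simp at hm4)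
      (by rintro rfl; simp at hm4)

theorem hasIntersectionProperty_reducedFamily (hIP : HasIntersectionProperty r)
    (hr : ∀ i, r i * r i = 1) (hcomm : ∀ i j, i + 1 < j → Commute (r i) (r j))
    (h01 : ¬Commute (r 0) (r 1)) (h12 : ¬Commute (r 1) (r 2))
    (hmem : r 0 ∈ closure {r 0 * r 2, r 3}) : HasIntersectionProperty (reducedFamily r) := by
  intro S T
  refine le_antisymm ?_ (le_inf (closure_mono (Set.image_mono Set.inter_subset_left))
    (closure_mono (Set.image_mono Set.inter_subset_right)))
  have hST : closure (reducedFamily r '' S) ⊓ closure (reducedFamily r '' T) ≤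
      closure (r '' (reducedIndex ⁻¹' (S ∩ T))) := by
    rw [Set.preimage_inter, ← hIP]
    exact inf_le_inf (closure_reducedFamily_le r S) (closure_reducedFamily_le r T)
  by_cases hpure : 1 ∈ S ∩ T → 2 ∈ S ∩ T
  · exact hST.trans (closure_reducedFamily_eq (hr 0) hmem hpure).ge
  obtain ⟨h1, h2⟩ : 1 ∈ S ∩ T ∧ 2 ∉ S ∩ T := by tauto
  by_cases h2S : 2 ∈ S
  · exact (le_inf inf_le_right hST).trans (closure_reducedFamily_inf_le hr hcomm hIP h01 h12
      Set.inter_subset_right h1 fun h2T => h2 ⟨h2S, h2T⟩)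
  · exact (le_inf inf_le_left hST).trans (closure_reducedFamily_inf_le hr hcomm hIP h01 h12
      Set.inter_subset_left h1 h2S)

theorem isStringCGroupRep_reducedFamily {n : ℕ} (hn : 4 ≤ n) (hr : ∀ k, r k * r k = 1)
    (hord : ∀ k < n, orderOf (r k) = 2) (hgen : closure (r '' Set.Iio n) = ⊤)
    (hcomm : ∀ i j, i + 1 < j → Commute (r i) (r j)) (hIP : HasIntersectionProperty r)
    (hirr : ∀ i, i + 1 < n → orderOf (r i * r (i + 1)) ≠ 2)
    (hmem : r 0 ∈ closure {r 0 * r 2, r 3}) :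
    IsStringCGroupRep (reducedFamily r ∘ Fin.val : Fin (n - 1) → G) := by
  have hne : ∀ i j, i < n → i ≠ j → r i ≠ r j := fun i j hi hij =>
    hIP.apply_ne_apply (mt orderOf_eq_one_iff.mpr (by rw [hord i hi]; decide)) hij
  have hnoncomm : ∀ i, i + 1 < n → ¬Commute (r i) (r (i + 1)) := fun i hi hc =>
    hirr i hi <| orderOf_mul_eq_two_of_commute (hr i) (hr (i + 1)) hc <|
      hne i (i + 1) (by omega) (by omega)
  refine ⟨fun i => orderOf_reducedFamily hr hord (hcomm 0 2 (by norm_num))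
    (hne 0 2 (by omega) (by norm_num)) (by omega), ?_,
    fun i j hij => reducedFamily_commute hcomm hij,
    (hasIntersectionProperty_reducedFamily hIP hr hcomm (hnoncomm 0 (by omega))
      (hnoncomm 1 (by omega)) hmem).comp Fin.val_injective⟩
  rw [eq_top_iff, ← hgen, closure_le, Set.range_comp, Fin.range_val]
  rintro _ ⟨m, hm, rfl⟩
  refine apply_mem_closure_reducedFamily_of_two_mem (hr 0) hmem ?_ (by simp; omega)
  obtain _ | _ | _ | k := m <;> simp [reducedIndex] at hm ⊢ <;> omega

end ReducedFamily

/-- Rank reduction: if `(G; (ρ₀, …, ρ_{n-1}))` is an irreducible string C-group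
representation of rank `n ≥ 4` and `ρ₀ ∈ ⟨ρ₀ρ₂, ρ₃⟩`, then
`(G; (ρ₁, ρ₀ρ₂, ρ₃, …, ρ_{n-1}))` is a string C-group representation of rank `n - 1`. -/
theorem rank_reduction {G : Type*} [Group G] (n : ℕ) (hn : 4 ≤ n) (ρ : Fin n → G)
    (h : IsStringCGroupRep ρ)
    (hirr : ∀ (i : ℕ) (hi : i + 1 < n), orderOf (ρ ⟨i, by omega⟩ * ρ ⟨i + 1, hi⟩) ≠ 2)
    (hmem : ρ ⟨0, by omega⟩ ∈
      Subgroup.closure {ρ ⟨0, by omega⟩ * ρ ⟨2, by omega⟩, ρ ⟨3, by omega⟩}) :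
    IsStringCGroupRep (fun i : Fin (n - 1) =>
      if i.val = 0 then ρ ⟨1, by omega⟩
      else if i.val = 1 then ρ ⟨0, by omega⟩ * ρ ⟨2, by omega⟩
      else ρ ⟨i.val + 1, by have := i.isLt; omega⟩) := by
  obtain ⟨hord, hgen, hcomm, hIP⟩ := h
  convert isStringCGroupRep_reducedFamily hn
    (extendByOne_mul_self fun i => by rw [← sq, ← hord i, pow_orderOf_eq_one])
    (fun k hk => by rw [extendByOne_of_lt ρ hk, hord])
    (by rwa [closure_image_extendByOne, Set.preimage_eq_univ_iff.mpr Fin.range_val.subset,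
      Set.image_univ])
    (fun i j => extendByOne_commute hcomm) (HasIntersectionProperty.extendByOne hIP)
    (fun i hi => by
      simpa only [extendByOne_of_lt ρ hi, extendByOne_of_lt ρ (Nat.lt_of_succ_lt hi)] using
        hirr i hi)
    (by simpa only [extendByOne_of_lt ρ (show 0 < n by omega),
      extendByOne_of_lt ρ (show 2 < n by omega), extendByOne_of_lt ρ (show 3 < n by omega)]
        using hmem) using 1
  funext ⟨i, hi⟩
  obtain _ | _ | k := i
  · simp [extendByOne_of_lt ρ (show 1 < n by omega)]
  · simp [extendByOne_of_lt ρ (show 0 < n by omega), extendByOne_of_lt ρ (show 2 < n by omega)]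
  · simp [extendByOne_of_lt ρ (show k + 3 < n by omega)]
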